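/- Let γ ∈ (−2,0], λ ≥ 0, and let κ : ℝ³ → ℝ satisfy κ₁⟨x⟩^{−λ} ≤ κ(x) ≤ κ₂⟨x⟩^{−λ} for all x ∈ ℝ³, with κ₁, κ₂ > 0. Let f : ℝ³×ℝ³ → [0,∞) be measurable with ∫_{ℝ⁶} f dx dv = ρ₀ > 0, ∫_{ℝ⁶} (|x|²+|v|²) f dx dv = c₂ < ∞, ∫_{ℝ⁶} f |log f| dx dv ≤ h̄ < ∞, and ∫_{ℝ⁶} (|x|^m + |v|^m) f dx dv ≤ K < ∞ for some m > max{12, λ+2}. Then there exists α > 0, depending only on γ, λ, κ₁, κ₂, ρ₀, c₂, h̄, K, m, such that for all x, v, ξ ∈ ℝ³: ξ · A[f](x,v) ξ ≥ α ⟨x⟩^{−λ} ⟨v⟩^{γ} |ξ|². -/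

import Mathlib

open MeasureTheory Real

noncomputable section

abbrev E3 : Type := EuclideanSpace ℝ (Fin 3)

/-- `⟨x⟩ = √(1+|x|²)`. -/
def jap (x : E3) : ℝ := Real.sqrt (1 + ‖x‖ ^ 2)

/-- The Landau kernel `N(w) = |w|^{γ+2} (Id - w⊗w/|w|²)` (extended by `0` at `w = 0`,
which holds automatically for `γ + 2 > 0` with the `rpow` convention). -/
def Nker (γ : ℝ) (w : E3) : Matrix (Fin 3) (Fin 3) ℝ :=
  Matrix.of fun i j => ‖w‖ ^ (γ + 2) * ((if i = j then (1 : ℝ) else 0) - w i * w j / ‖w‖ ^ 2)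

/-! ### Auxiliary lemmas -/

lemma e3_norm_sq (y : E3) : ‖y‖ ^ 2 = ∑ i, y i ^ 2 := by
  rw [EuclideanSpace.norm_eq, Real.sq_sqrt (by positivity)]
  simp [sq_abs]

lemma e3_inner (w ξ : E3) : (inner ℝ w ξ : ℝ) = ∑ i, w i * ξ i := by
  simp [PiLp.inner_apply, RCLike.inner_apply, conj_trivial]
  exact Finset.sum_congr rfl (fun i _ => mul_comm _ _)

lemma coord_abs_le (y : E3) (i : Fin 3) : |y i| ≤ ‖y‖ := by
  rw [← Real.sqrt_sq_eq_abs, EuclideanSpace.norm_eq]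
  apply Real.sqrt_le_sqrt
  simp only [Real.norm_eq_abs, sq_abs]
  exact Finset.single_le_sum (f := fun j => y j ^ 2) (fun j _ => sq_nonneg _) (Finset.mem_univ i)

lemma vol_box_le (S : Set E3) (a b : Fin 3 → ℝ)
    (h : ∀ y ∈ S, ∀ i, y i ∈ Set.Icc (a i) (b i)) :
    volume S ≤ ∏ i, ENNReal.ofReal (b i - a i) := by
  have hsub : S ⊆ (MeasurableEquiv.toLp 2 (Fin 3 → ℝ)).symm ⁻¹'
      (Set.univ.pi fun i => Set.Icc (a i) (b i)) := by
    intro y hy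
    simp only [Set.mem_preimage, Set.mem_pi, Set.mem_univ, forall_true_left]
    intro i
    exact h y hy i
  calc volume S ≤ volume ((MeasurableEquiv.toLp 2 (Fin 3 → ℝ)).symm ⁻¹'
      (Set.univ.pi fun i => Set.Icc (a i) (b i))) := measure_mono hsub
    _ = volume (Set.univ.pi fun i => Set.Icc (a i) (b i)) :=
        (EuclideanSpace.volume_preserving_symm_measurableEquiv_toLp (Fin 3)).measure_preimage
          (MeasurableSet.univ_pi fun i => measurableSet_Icc).nullMeasurableSet
    _ = ∏ i, ENNReal.ofReal (b i - a i) := by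
        rw [volume_pi_pi]; simp [Real.volume_Icc]

lemma entropy_bound {X : Type*} [MeasurableSpace X] {μ : Measure X} {f : X → ℝ}
    (hf_int : Integrable f μ) (hnn : ∀ p, 0 ≤ f p)
    (hent_int : Integrable (fun p => f p * |Real.log (f p)|) μ)
    {S : Set X} (hS : MeasurableSet S) (hfin : μ S ≠ ⊤) {M : ℝ} (hM : 1 < M) :
    ∫ p in S, f p ∂μ ≤ M * (μ S).toReal + (∫ p, f p * |Real.log (f p)| ∂μ) / Real.log M := by
  have hlogM : 0 < Real.log M := Real.log_pos hM
  have key : ∀ p, f p ≤ M + f p * |Real.log (f p)| / Real.log M := by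
    intro p
    rcases le_or_gt (f p) M with h | h
    · have : 0 ≤ f p * |Real.log (f p)| / Real.log M := by
        have := hnn p; positivity
      linarith
    · have h2 : Real.log M ≤ Real.log (f p) := Real.log_le_log (by linarith) h.le
      have h3 : Real.log M ≤ |Real.log (f p)| := h2.trans (le_abs_self _)
      have h4 : f p * Real.log M ≤ f p * |Real.log (f p)| :=
        mul_le_mul_of_nonneg_left h3 (hnn p)
      have h5 : f p ≤ f p * |Real.log (f p)| / Real.log M := by
        rw [le_div_iff₀ hlogM]; exact h4
      linarith [hM.le.trans h.le, hM]
  have hfinlt : μ S < ⊤ := lt_top_iff_ne_top.2 hfin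
  calc ∫ p in S, f p ∂μ
      ≤ ∫ p in S, (M + f p * |Real.log (f p)| / Real.log M) ∂μ := by
        apply setIntegral_mono_on hf_int.integrableOn ?_ hS (fun p _ => key p)
        exact (integrableOn_const hfin).add
          ((hent_int.integrableOn).div_const _)
    _ = M * (μ S).toReal + ∫ p in S, f p * |Real.log (f p)| / Real.log M ∂μ := by
        rw [integral_add (integrableOn_const (C := M) hfin)
          ((hent_int.integrableOn).div_const _), setIntegral_const, smul_eq_mul, mul_comm, Measure.real]
    _ ≤ M * (μ S).toReal + (∫ p, f p * |Real.log (f p)| ∂μ) / Real.log M := by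
        gcongr
        rw [integral_div]
        apply div_le_div_of_nonneg_right ?_ hlogM.le
        apply setIntegral_le_integral hent_int
        filter_upwards with p
        have := hnn p; positivity

lemma quad_eq (γ : ℝ) (w ξ : E3) (a b : ℝ) :
    ∑ i : Fin 3, ∑ j : Fin 3, ξ i * (Nker γ w i j * a * b) * ξ j
      = ‖w‖ ^ (γ + 2) * ((∑ i : Fin 3, ξ i ^ 2)
          - (∑ i : Fin 3, w i * ξ i) ^ 2 / ‖w‖ ^ 2) * (a * b) := by
  simp only [Nker, Matrix.of_apply, Fin.sum_univ_three]
  norm_num [Fin.ext_iff]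
  ring

lemma quad_eq' (γ : ℝ) (w ξ : E3) (a b : ℝ) :
    ∑ i : Fin 3, ∑ j : Fin 3, ξ i * (Nker γ w i j * a * b) * ξ j
      = ‖w‖ ^ (γ + 2) * (‖ξ‖ ^ 2 - (inner ℝ w ξ : ℝ) ^ 2 / ‖w‖ ^ 2) * (a * b) := by
  rw [quad_eq, ← e3_norm_sq, ← e3_inner]

lemma coord_cont (v : E3) (k : Fin 3) : Continuous (fun u : E3 => (v - u) k) := by
  have h1 : Continuous (fun y : E3 => y k) :=
    (continuous_apply k).comp (PiLp.continuous_ofLp 2 (fun _ : Fin 3 => ℝ))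
  exact h1.comp (continuous_const.sub continuous_id)

lemma Nker_abs_le (γ : ℝ) (w : E3) (i j : Fin 3) :
    |Nker γ w i j| ≤ 2 * ‖w‖ ^ (γ + 2) := by
  have h1 : |w i * w j / ‖w‖ ^ 2| ≤ 1 := by
    rcases eq_or_ne w 0 with rfl | hw
    · simp
    · have hpos : (0:ℝ) < ‖w‖ ^ 2 := pow_pos (norm_pos_iff.2 hw) 2
      rw [abs_div, abs_of_nonneg hpos.le, div_le_one hpos]
      calc |w i * w j| = |w i| * |w j| := abs_mul _ _
        _ ≤ ‖w‖ * ‖w‖ := mul_le_mul (coord_abs_le w i) (coord_abs_le w j) (abs_nonneg _)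
            (norm_nonneg _)
        _ = ‖w‖ ^ 2 := (sq ‖w‖).symm
  have h2 : |(if i = j then (1:ℝ) else 0) - w i * w j / ‖w‖ ^ 2| ≤ 2 := by
    have : |(if i = j then (1:ℝ) else 0)| ≤ 1 := by split <;> simp
    calc _ ≤ |(if i = j then (1:ℝ) else 0)| + |w i * w j / ‖w‖ ^ 2| := abs_sub _ _
      _ ≤ 2 := by linarith
  have h0 : (0:ℝ) ≤ ‖w‖ ^ (γ + 2) := Real.rpow_nonneg (norm_nonneg _) _
  calc |Nker γ w i j| = ‖w‖ ^ (γ + 2) * |(if i = j then (1:ℝ) else 0) - w i * w j / ‖w‖ ^ 2| := by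
        rw [Nker, Matrix.of_apply, abs_mul, abs_of_nonneg h0]
    _ ≤ ‖w‖ ^ (γ + 2) * 2 := by
        nlinarith [abs_nonneg ((if i = j then (1:ℝ) else 0) - w i * w j / ‖w‖ ^ 2)]
    _ = 2 * ‖w‖ ^ (γ + 2) := mul_comm _ _

lemma rpow_le_one_add_sq {γ t : ℝ} (h1 : 0 < γ + 2) (h2 : γ + 2 ≤ 2) (ht : 0 ≤ t) :
    t ^ (γ + 2) ≤ 1 + t ^ 2 := by
  rcases le_or_gt t 1 with h | h
  · have : t ^ (γ + 2) ≤ 1 := Real.rpow_le_one ht h h1.le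
    nlinarith [sq_nonneg t]
  · have : t ^ (γ + 2) ≤ t ^ (2:ℝ) := Real.rpow_le_rpow_of_exponent_le h.le h2
    rw [Real.rpow_two] at this
    linarith

lemma Nker_meas (γ : ℝ) (hγ : 0 < γ + 2) (v : E3) (i j : Fin 3) :
    Measurable (fun u : E3 => Nker γ (v - u) i j) := by
  simp only [Nker, Matrix.of_apply]
  have hn : Continuous (fun u : E3 => ‖v - u‖) := (continuous_const.sub continuous_id).norm
  have hA : Continuous (fun u : E3 => ‖v - u‖ ^ (γ + 2)) := by
    rw [continuous_iff_continuousAt]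
    intro u
    exact (Real.continuousAt_rpow_const _ _ (Or.inr hγ.le)).comp hn.continuousAt
  exact hA.measurable.mul ((measurable_const.sub
    ((((coord_cont v i).mul (coord_cont v j)).measurable).div
      ((hn.pow 2).measurable))))

lemma integrable_entry {γ : ℝ} (hγ1 : 0 < γ + 2) (hγ2 : γ + 2 ≤ 2)
    {κ₂ : ℝ} (hκ₂ : 0 < κ₂)
    (κ : E3 → ℝ) (hκ_meas : Measurable κ) (hκub : ∀ y, |κ y| ≤ κ₂)
    (f : E3 × E3 → ℝ) (hf_meas : Measurable f) (hf_nonneg : ∀ p, 0 ≤ f p)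
    (hf_int : Integrable f)
    (hmom2_int : Integrable (fun p : E3 × E3 => (‖p.1‖ ^ 2 + ‖p.2‖ ^ 2) * f p))
    (x v : E3) (i j : Fin 3) :
    Integrable (fun p : E3 × E3 => Nker γ (v - p.2) i j * κ (x - p.1) * f p) := by
  have hmeas : Measurable (fun p : E3 × E3 => Nker γ (v - p.2) i j * κ (x - p.1) * f p) :=
    (((Nker_meas γ hγ1 v i j).comp measurable_snd).mul
      ((hκ_meas.comp (measurable_const.sub measurable_fst)))).mul hf_meas
  apply Integrable.mono' (g := fun p : E3 × E3 =>
      (2 * κ₂ * (1 + 2 * ‖v‖ ^ 2)) * f p + (4 * κ₂) * ((‖p.1‖ ^ 2 + ‖p.2‖ ^ 2) * f p))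
    ((hf_int.const_mul _).add (hmom2_int.const_mul _)) hmeas.aestronglyMeasurable
  filter_upwards with p
  have hN : |Nker γ (v - p.2) i j| ≤ 2 * (1 + ‖v - p.2‖ ^ 2) := by
    refine (Nker_abs_le γ _ i j).trans ?_
    have := rpow_le_one_add_sq hγ1 hγ2 (norm_nonneg (v - p.2))
    linarith
  have hw : ‖v - p.2‖ ^ 2 ≤ 2 * ‖v‖ ^ 2 + 2 * ‖p.2‖ ^ 2 := by
    have h := norm_sub_le v p.2
    nlinarith [sq_nonneg (‖v‖ - ‖p.2‖), pow_le_pow_left₀ (norm_nonneg (v - p.2)) h 2]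
  have hf0 := hf_nonneg p
  have hκb := hκub (x - p.1)
  have habs : ‖Nker γ (v - p.2) i j * κ (x - p.1) * f p‖
      = |Nker γ (v - p.2) i j| * |κ (x - p.1)| * f p := by
    rw [norm_mul, norm_mul]
    simp [abs_of_nonneg hf0, Real.norm_eq_abs]
  rw [habs]
  have h1 : |Nker γ (v - p.2) i j| * |κ (x - p.1)| ≤ (2 * (1 + ‖v - p.2‖ ^ 2)) * κ₂ :=
    mul_le_mul hN hκb (abs_nonneg _) (by positivity)
  calc |Nker γ (v - p.2) i j| * |κ (x - p.1)| * f p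
      ≤ (2 * (1 + ‖v - p.2‖ ^ 2)) * κ₂ * f p := mul_le_mul_of_nonneg_right h1 hf0
    _ ≤ (2 * κ₂ * (1 + 2 * ‖v‖ ^ 2)) * f p + (4 * κ₂) * ((‖p.1‖ ^ 2 + ‖p.2‖ ^ 2) * f p) := by
        nlinarith [mul_nonneg (mul_nonneg hκ₂.le (sq_nonneg ‖p.1‖)) hf0,
          mul_le_mul_of_nonneg_right (mul_le_mul_of_nonneg_left hw hκ₂.le) hf0,
          mul_nonneg hκ₂.le hf0]

lemma cyl_vol_le (v ξ : E3) (hξ : ξ ≠ 0) (R r : ℝ) (hr : 0 ≤ r) :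
    volume {u : E3 | ‖u‖ ≤ R ∧
        ‖v - u‖ ^ 2 * ‖ξ‖ ^ 2 - (inner ℝ (v - u) ξ : ℝ) ^ 2 < r ^ 2 * ‖ξ‖ ^ 2}
      ≤ ENNReal.ofReal (2 * R) * ENNReal.ofReal (2 * r) * ENNReal.ofReal (2 * r) := by
  have hξn : (0:ℝ) < ‖ξ‖ := norm_pos_iff.2 hξ
  set unit : E3 := ‖ξ‖⁻¹ • ξ with hunit
  have hunorm : ‖unit‖ = 1 := by
    rw [hunit, norm_smul, norm_inv, norm_norm, inv_mul_cancel₀ hξn.ne']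
  have hcard : Module.finrank ℝ E3 = Fintype.card (Fin 3) := by
    simp [finrank_euclideanSpace_fin]
  have hv : Orthonormal ℝ (Set.restrict {0} (fun _ : Fin 3 => unit)) := by
    constructor
    · intro i; exact hunorm
    · intro i j hij
      exfalso
      apply hij
      rcases i with ⟨i, hi⟩; rcases j with ⟨j, hj⟩
      simp only [Set.mem_singleton_iff] at hi hj
      subst hi; subst hj; rfl
  obtain ⟨b, hb⟩ := hv.exists_orthonormalBasis_extension_of_card_eq hcard
  have hb0 : b 0 = unit := hb 0 rfl
  set T : E3 → E3 := fun u => b.repr (v - u) with hT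
  have hTmp : MeasurePreserving T volume volume :=
    (b.measurePreserving_repr).comp (Measure.measurePreserving_sub_left volume v)
  set c : ℝ := b.repr v 0 with hc
  set Box : Set E3 := {y : E3 | ∀ i, y i ∈ Set.Icc (![c - R, -r, -r] i) (![c + R, r, r] i)}
    with hBoxdef
  have hBoxmeas : MeasurableSet Box := by
    have : Box = ⋂ i, {y : E3 | y i ∈ Set.Icc (![c - R, -r, -r] i) (![c + R, r, r] i)} := by
      ext y; simp [hBoxdef, Set.mem_iInter]
    rw [this]
    apply MeasurableSet.iInter
    intro i
    have hcont : Continuous (fun y : E3 => y i) :=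
      (continuous_apply i).comp (PiLp.continuous_ofLp 2 (fun _ : Fin 3 => ℝ))
    exact hcont.measurable measurableSet_Icc
  have hsub : {u : E3 | ‖u‖ ≤ R ∧
      ‖v - u‖ ^ 2 * ‖ξ‖ ^ 2 - (inner ℝ (v - u) ξ : ℝ) ^ 2 < r ^ 2 * ‖ξ‖ ^ 2} ⊆ T ⁻¹' Box := by
    rintro u ⟨hu1, hu2⟩
    set w : E3 := v - u with hw
    set y : E3 := b.repr w with hy
    have hynorm : ∑ i, y i ^ 2 = ‖w‖ ^ 2 := by
      rw [← e3_norm_sq, hy]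
      rw [b.repr.norm_map]
    have hy0 : y 0 = ‖ξ‖⁻¹ * (inner ℝ ξ w : ℝ) := by
      rw [hy, b.repr_apply_apply, hb0, hunit, real_inner_smul_left]
    have hinner : (inner ℝ (v - u) ξ : ℝ) = ‖ξ‖ * y 0 := by
      rw [hy0, real_inner_comm, ← mul_assoc, mul_inv_cancel₀ hξn.ne', one_mul]
    have hperp : y 1 ^ 2 + y 2 ^ 2 < r ^ 2 := by
      have hsum : y 0 ^ 2 + y 1 ^ 2 + y 2 ^ 2 = ‖w‖ ^ 2 := by
        rw [← hynorm, Fin.sum_univ_three]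
      have h2 : ‖w‖ ^ 2 * ‖ξ‖ ^ 2 - (‖ξ‖ * y 0) ^ 2 < r ^ 2 * ‖ξ‖ ^ 2 := by
        rw [← hinner]; exact hu2
      have hsq : (0:ℝ) < ‖ξ‖ ^ 2 := by positivity
      have he : ‖w‖ ^ 2 * ‖ξ‖ ^ 2 - (‖ξ‖ * y 0) ^ 2 = (y 1 ^ 2 + y 2 ^ 2) * ‖ξ‖ ^ 2 := by
        rw [← hsum]; ring
      have h3 : (y 1 ^ 2 + y 2 ^ 2) * ‖ξ‖ ^ 2 < r ^ 2 * ‖ξ‖ ^ 2 := by linarith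
      exact lt_of_mul_lt_mul_right h3 hsq.le
    have hy12 : |y 1| ≤ r ∧ |y 2| ≤ r := by
      constructor
      · nlinarith [abs_nonneg (y 1), sq_abs (y 1), sq_nonneg (y 2)]
      · nlinarith [abs_nonneg (y 2), sq_abs (y 2), sq_nonneg (y 1)]
    have hy0R : |y 0 - c| ≤ R := by
      have hwv : w - v = -u := by rw [hw]; abel
      have h1 : |b.repr (-u) 0| ≤ ‖b.repr (-u)‖ := coord_abs_le _ 0
      rw [b.repr.norm_map, norm_neg] at h1
      have h2 : y 0 - c = b.repr (-u) 0 := by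
        have h3 : (b.repr (-u) : E3) = b.repr w - b.repr v := by rw [← hwv, map_sub]
        rw [h3]
        rfl
      rw [h2]
      exact h1.trans hu1
    have hTy : T u = y := rfl
    show T u ∈ Box
    rw [hTy]
    intro i
    fin_cases i <;>
      simp only [Fin.mk_zero, Fin.mk_one, Fin.isValue, Matrix.cons_val_zero,
        Matrix.cons_val_one, Matrix.head_cons, Matrix.cons_val_two, Matrix.tail_cons,
        Set.mem_Icc]
    · have h := abs_le.1 hy0R
      constructor <;> linarith [h.1, h.2]
    · exact abs_le.1 hy12.1
    · exact abs_le.1 hy12.2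
  calc volume _ ≤ volume (T ⁻¹' Box) := measure_mono hsub
    _ = volume Box := hTmp.measure_preimage hBoxmeas.nullMeasurableSet
    _ ≤ ∏ i, ENNReal.ofReal (![c + R, r, r] i - ![c - R, -r, -r] i) :=
        vol_box_le Box _ _ (fun y hy i => hy i)
    _ = ENNReal.ofReal (2 * R) * ENNReal.ofReal (2 * r) * ENNReal.ofReal (2 * r) := by
        rw [Fin.prod_univ_three]
        show ENNReal.ofReal (c + R - (c - R)) * ENNReal.ofReal (r - -r) * ENNReal.ofReal (r - -r) = _
        rw [show c + R - (c - R) = 2 * R by ring, show r - -r = 2 * r by ring]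

lemma jap_one_le (x : E3) : 1 ≤ jap x := by
  have h : Real.sqrt 1 ≤ Real.sqrt (1 + ‖x‖ ^ 2) :=
    Real.sqrt_le_sqrt (by nlinarith [sq_nonneg ‖x‖])
  simpa [jap] using h

lemma jap_pos (x : E3) : 0 < jap x := lt_of_lt_of_le one_pos (jap_one_le x)

lemma norm_le_jap (x : E3) : ‖x‖ ≤ jap x := by
  have h : Real.sqrt (‖x‖ ^ 2) ≤ Real.sqrt (1 + ‖x‖ ^ 2) :=
    Real.sqrt_le_sqrt (by linarith)
  simpa [jap, Real.sqrt_sq (norm_nonneg x)] using h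

set_option maxHeartbeats 2000000 in
/-- Coercivity of the diffusion matrix
`A[f](x,v) = ∫ N(v-v*) κ(x-x*) f(x*,v*) dx* dv*`:
`ξ · A[f](x,v) ξ ≥ α ⟨x⟩^{-λ} ⟨v⟩^{γ} |ξ|²`. -/
theorem statement6 (γ lam κ₁ κ₂ ρ₀ c₂ hbar K m : ℝ)
    (hγ : γ ∈ Set.Ioc (-2 : ℝ) 0) (hlam : 0 ≤ lam)
    (hκ₁ : 0 < κ₁) (hκ₂ : 0 < κ₂) (hm : max 12 (lam + 2) < m)
    (κ : E3 → ℝ) (hκ_meas : Measurable κ)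
    (hκ : ∀ x : E3, κ₁ * jap x ^ (-lam) ≤ κ x ∧ κ x ≤ κ₂ * jap x ^ (-lam))
    (f : E3 × E3 → ℝ) (hf_meas : Measurable f) (hf_nonneg : ∀ p, 0 ≤ f p)
    (hf_int : Integrable f) (hmass : ∫ p, f p = ρ₀) (hρ : 0 < ρ₀)
    (hmom2_int : Integrable (fun p : E3 × E3 => (‖p.1‖ ^ 2 + ‖p.2‖ ^ 2) * f p))
    (hmom2 : ∫ p : E3 × E3, (‖p.1‖ ^ 2 + ‖p.2‖ ^ 2) * f p = c₂)
    (hent_int : Integrable (fun p : E3 × E3 => f p * |Real.log (f p)|))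
    (hent : ∫ p : E3 × E3, f p * |Real.log (f p)| ≤ hbar)
    (hmom_int : Integrable (fun p : E3 × E3 => (‖p.1‖ ^ m + ‖p.2‖ ^ m) * f p))
    (hmom : ∫ p : E3 × E3, (‖p.1‖ ^ m + ‖p.2‖ ^ m) * f p ≤ K) :
    ∃ α : ℝ, 0 < α ∧ ∀ x v ξ : E3,
      α * jap x ^ (-lam) * jap v ^ γ * ‖ξ‖ ^ 2 ≤
        ∑ i : Fin 3, ∑ j : Fin 3,
          ξ i * (∫ p : E3 × E3, Nker γ (v - p.2) i j * κ (x - p.1) * f p) * ξ j := by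
  obtain ⟨hγl, hγr⟩ := hγ
  have hγ1 : 0 < γ + 2 := by linarith
  have hγ2 : γ + 2 ≤ 2 := by linarith
  have hc₂ : 0 ≤ c₂ := by
    rw [← hmom2]
    exact integral_nonneg fun p => mul_nonneg (by positivity) (hf_nonneg p)
  have hbar0 : 0 ≤ hbar :=
    le_trans (integral_nonneg fun p => mul_nonneg (hf_nonneg p) (abs_nonneg _)) hent
  -- parameters
  set R : ℝ := Real.sqrt (8 * c₂ / ρ₀) + 1 with hRdef
  have hR1 : 1 ≤ R := le_add_of_nonneg_left (Real.sqrt_nonneg _)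
  have hR0 : 0 < R := lt_of_lt_of_le one_pos hR1
  have hRsq : 8 * c₂ / ρ₀ ≤ R ^ 2 := by
    have h := Real.sq_sqrt (show (0:ℝ) ≤ 8 * c₂ / ρ₀ by positivity)
    nlinarith [Real.sqrt_nonneg (8 * c₂ / ρ₀)]
  set M : ℝ := Real.exp (8 * (hbar + 1) / ρ₀) with hMdef
  have hM0 : 0 < M := Real.exp_pos _
  have hM1 : 1 < M := by
    rw [hMdef, show (1:ℝ) = Real.exp 0 from (Real.exp_zero).symm]
    exact Real.exp_lt_exp.2 (by positivity)
  have hlogM : Real.log M = 8 * (hbar + 1) / ρ₀ := by rw [hMdef, Real.log_exp]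
  set r : ℝ := Real.sqrt (ρ₀ / (512 * M * R ^ 4)) with hrdef
  have hr0 : 0 < r := Real.sqrt_pos.2 (by positivity)
  have hr2 : r ^ 2 = ρ₀ / (512 * M * R ^ 4) := Real.sq_sqrt (by positivity)
  set B : ℝ := Real.sqrt (2 + 2 * R ^ 2) with hBdef
  have hB0 : 0 < B := Real.sqrt_pos.2 (by positivity)
  -- κ bounds
  have hκub : ∀ y, |κ y| ≤ κ₂ := by
    intro y
    have h1 := (hκ y).1
    have h2 := (hκ y).2
    have hj1 : (0:ℝ) < jap y ^ (-lam) := Real.rpow_pos_of_pos (jap_pos y) _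
    have hj2 : jap y ^ (-lam) ≤ 1 :=
      Real.rpow_le_one_of_one_le_of_nonpos (jap_one_le y) (neg_nonpos.2 hlam)
    rw [abs_le]
    constructor
    · nlinarith
    · nlinarith
  refine ⟨(1 + R) ^ γ * r ^ 2 * κ₁ * B ^ (-lam) * (ρ₀ / 2), ?_, ?_⟩
  · have h1 : (0:ℝ) < (1 + R) ^ γ := Real.rpow_pos_of_pos (by linarith) _
    have h2 : (0:ℝ) < B ^ (-lam) := Real.rpow_pos_of_pos hB0 _
    positivity
  intro x v ξ
  by_cases hξ0 : ξ = 0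
  · simp [hξ0]
  have hξn : (0:ℝ) < ‖ξ‖ := norm_pos_iff.2 hξ0
  have hInt : ∀ i j : Fin 3, Integrable
      (fun p : E3 × E3 => Nker γ (v - p.2) i j * κ (x - p.1) * f p) :=
    fun i j => integrable_entry hγ1 hγ2 hκ₂ κ hκ_meas hκub f hf_meas hf_nonneg hf_int
      hmom2_int x v i j
  -- the good sets
  set Dfun : E3 → ℝ := fun u => ‖v - u‖ ^ 2 * ‖ξ‖ ^ 2 - (inner ℝ (v - u) ξ : ℝ) ^ 2 with hDdef
  have hDcont : Continuous Dfun := by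
    rw [hDdef]
    apply Continuous.sub
    · exact ((continuous_const.sub continuous_id).norm.pow 2).mul continuous_const
    · exact (Continuous.inner (continuous_const.sub continuous_id) continuous_const).pow 2
  set Av : Set E3 := {u : E3 | ‖u‖ ≤ R} with hAvdef
  set Bv : Set E3 := {u : E3 | ‖u‖ ≤ R ∧ Dfun u < r ^ 2 * ‖ξ‖ ^ 2} with hBvdef
  set Gv : Set E3 := {u : E3 | ‖u‖ ≤ R ∧ r ^ 2 * ‖ξ‖ ^ 2 ≤ Dfun u} with hGvdef
  have hAvmeas : MeasurableSet Av := measurableSet_le continuous_norm.measurable measurable_const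
  have hBvmeas : MeasurableSet Bv := by
    have : Bv = {u : E3 | ‖u‖ ≤ R} ∩ {u : E3 | Dfun u < r ^ 2 * ‖ξ‖ ^ 2} := rfl
    rw [this]
    exact (measurableSet_le continuous_norm.measurable measurable_const).inter
      (measurableSet_lt hDcont.measurable measurable_const)
  have hGvmeas : MeasurableSet Gv := by
    have : Gv = {u : E3 | ‖u‖ ≤ R} ∩ {u : E3 | r ^ 2 * ‖ξ‖ ^ 2 ≤ Dfun u} := rfl
    rw [this]
    exact (measurableSet_le continuous_norm.measurable measurable_const).inter
      (measurableSet_le measurable_const hDcont.measurable)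
  set Sset : Set (E3 × E3) := Av ×ˢ Bv with hSdef
  set Gset : Set (E3 × E3) := Av ×ˢ Gv with hGdef
  set Ball2 : Set (E3 × E3) := Av ×ˢ Av with hB2def
  have hSmeas : MeasurableSet Sset := hAvmeas.prod hBvmeas
  have hGmeas : MeasurableSet Gset := hAvmeas.prod hGvmeas
  have hB2meas : MeasurableSet Ball2 := hAvmeas.prod hAvmeas
  -- volume of the bad cylinder set
  have hvolAv : volume Av ≤ ENNReal.ofReal (2 * R) * ENNReal.ofReal (2 * R)
      * ENNReal.ofReal (2 * R) := by
    have h := vol_box_le Av (fun _ => -R) (fun _ => R) ?_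
    · calc volume Av ≤ ∏ i : Fin 3, ENNReal.ofReal (R - -R) := h
        _ = ENNReal.ofReal (2 * R) * ENNReal.ofReal (2 * R) * ENNReal.ofReal (2 * R) := by
            rw [Fin.prod_univ_three]
            rw [show R - -R = 2 * R by ring]
    · intro y hy i
      have h1 : |y i| ≤ R := (coord_abs_le y i).trans hy
      exact ⟨neg_le_of_abs_le h1, le_of_abs_le h1⟩
  have hvolBv : volume Bv ≤ ENNReal.ofReal (2 * R) * ENNReal.ofReal (2 * r)
      * ENNReal.ofReal (2 * r) := cyl_vol_le v ξ hξ0 R r hr0.le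
  have hvolS : volume Sset ≤ ENNReal.ofReal (64 * R ^ 4 * r ^ 2) := by
    have hprod : volume Sset = volume Av * volume Bv := by
      rw [hSdef, MeasureTheory.Measure.volume_eq_prod, Measure.prod_prod]
    rw [hprod]
    calc volume Av * volume Bv
        ≤ (ENNReal.ofReal (2 * R) * ENNReal.ofReal (2 * R) * ENNReal.ofReal (2 * R))
          * (ENNReal.ofReal (2 * R) * ENNReal.ofReal (2 * r) * ENNReal.ofReal (2 * r)) :=
          mul_le_mul' hvolAv hvolBv
      _ = ENNReal.ofReal (64 * R ^ 4 * r ^ 2) := by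
          have h1 : (0:ℝ) ≤ 2 * R := by positivity
          have h2 : (0:ℝ) ≤ 2 * r := by positivity
          rw [show (64 * R ^ 4 * r ^ 2 : ℝ)
              = (2*R)*((2*R)*((2*R)*((2*R)*((2*r)*(2*r))))) by ring,
            ENNReal.ofReal_mul (p := 2*R) h1, ENNReal.ofReal_mul (p := 2*R) h1,
            ENNReal.ofReal_mul (p := 2*R) h1, ENNReal.ofReal_mul (p := 2*R) h1,
            ENNReal.ofReal_mul (p := 2*r) h2]
          ring
  have hSfin : volume Sset ≠ ⊤ := (lt_of_le_of_lt hvolS ENNReal.ofReal_lt_top).ne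
  -- entropy bound on the cylinder mass
  have hSmass : ∫ p in Sset, f p ≤ ρ₀ / 4 := by
    have h := entropy_bound hf_int hf_nonneg hent_int hSmeas hSfin hM1
    have hlog0 : 0 < Real.log M := Real.log_pos hM1
    have htoReal : (volume Sset).toReal ≤ 64 * R ^ 4 * r ^ 2 :=
      ENNReal.toReal_le_of_le_ofReal (by positivity) hvolS
    have h1 : M * (volume Sset).toReal ≤ ρ₀ / 8 := by
      have : M * (volume Sset).toReal ≤ M * (64 * R ^ 4 * r ^ 2) :=
        mul_le_mul_of_nonneg_left htoReal hM0.le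
      have heq : M * (64 * R ^ 4 * r ^ 2) = ρ₀ / 8 := by
        rw [hr2]
        field_simp
        ring
      exact this.trans heq.le
    have h2 : (∫ p : E3 × E3, f p * |Real.log (f p)|) / Real.log M ≤ ρ₀ / 8 := by
      have h3 : (∫ p : E3 × E3, f p * |Real.log (f p)|) / Real.log M
          ≤ hbar / Real.log M := by
        exact div_le_div_of_nonneg_right hent hlog0.le
      have h4 : hbar / Real.log M ≤ ρ₀ / 8 := by
        rw [hlogM, div_div_eq_mul_div, div_le_iff₀ (by positivity)]
        nlinarith
      linarith
    linarith
  -- Chebyshev bound outside the balls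
  have hout : ∫ p in Ball2ᶜ, f p ≤ ρ₀ / 8 := by
    have hpt : ∀ p ∈ Ball2ᶜ, f p ≤ ((‖p.1‖ ^ 2 + ‖p.2‖ ^ 2) * f p) / R ^ 2 := by
      intro p hp
      have hmem : ¬(p.1 ∈ Av ∧ p.2 ∈ Av) := by
        simpa [hB2def, Set.mem_prod] using hp
      have hR2 : R ^ 2 ≤ ‖p.1‖ ^ 2 + ‖p.2‖ ^ 2 := by
        rcases not_and_or.1 hmem with h | h
        · have : R < ‖p.1‖ := lt_of_not_ge h
          nlinarith [sq_nonneg ‖p.2‖]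
        · have : R < ‖p.2‖ := lt_of_not_ge h
          nlinarith [sq_nonneg ‖p.1‖]
      rw [le_div_iff₀ (by positivity)]
      have := hf_nonneg p
      nlinarith
    calc ∫ p in Ball2ᶜ, f p
        ≤ ∫ p in Ball2ᶜ, ((‖p.1‖ ^ 2 + ‖p.2‖ ^ 2) * f p) / R ^ 2 :=
          setIntegral_mono_on hf_int.integrableOn
            (hmom2_int.div_const _).integrableOn hB2meas.compl hpt
      _ ≤ ∫ p : E3 × E3, ((‖p.1‖ ^ 2 + ‖p.2‖ ^ 2) * f p) / R ^ 2 := by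
          apply setIntegral_le_integral (hmom2_int.div_const _)
          filter_upwards with p
          have := hf_nonneg p
          positivity
      _ = c₂ / R ^ 2 := by rw [integral_div, hmom2]
      _ ≤ ρ₀ / 8 := by
          rw [div_le_div_iff₀ (by positivity) (by norm_num)]
          calc c₂ * 8 = (8 * c₂ / ρ₀) * ρ₀ := by field_simp
            _ ≤ R ^ 2 * ρ₀ := mul_le_mul_of_nonneg_right hRsq hρ.le
            _ = ρ₀ * R ^ 2 := mul_comm _ _
  -- mass on the good set
  have hGmass : ρ₀ / 2 ≤ ∫ p in Gset, f p := by
    have hunion : Ball2 = Gset ∪ Sset := by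
      ext p
      simp only [hB2def, hGdef, hSdef, Set.mem_prod, Set.mem_union, hAvdef, hGvdef, hBvdef,
        Set.mem_setOf_eq]
      constructor
      · rintro ⟨h1, h2⟩
        rcases le_or_gt (r ^ 2 * ‖ξ‖ ^ 2) (Dfun p.2) with h | h
        · exact Or.inl ⟨h1, h2, h⟩
        · exact Or.inr ⟨h1, h2, h⟩
      · rintro (⟨h1, h2, _⟩ | ⟨h1, h2, _⟩) <;> exact ⟨h1, h2⟩
    have hdisj : Disjoint Gset Sset := by
      rw [Set.disjoint_left]
      rintro p ⟨_, _, h1⟩ ⟨_, _, h2⟩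
      exact absurd h1 (not_le.2 h2)
    have hsplit : ∫ p in Ball2, f p = (∫ p in Gset, f p) + ∫ p in Sset, f p := by
      rw [hunion, setIntegral_union hdisj hSmeas hf_int.integrableOn hf_int.integrableOn]
    have htot : (∫ p in Ball2, f p) + ∫ p in Ball2ᶜ, f p = ρ₀ := by
      rw [integral_add_compl hB2meas hf_int, hmass]
    linarith
  -- pointwise lower bound on the good set
  set qlow : ℝ := (1 + R) ^ γ * jap v ^ γ * (r ^ 2 * ‖ξ‖ ^ 2) with hqlowdef
  set klow : ℝ := κ₁ * (B ^ (-lam) * jap x ^ (-lam)) with hklowdef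
  have hqlow0 : 0 ≤ qlow := by
    have h1 : (0:ℝ) < (1 + R) ^ γ := Real.rpow_pos_of_pos (by linarith) _
    have h2 : (0:ℝ) < jap v ^ γ := Real.rpow_pos_of_pos (jap_pos v) _
    positivity
  have hklow0 : 0 ≤ klow := by
    have h1 : (0:ℝ) < B ^ (-lam) := Real.rpow_pos_of_pos hB0 _
    have h2 : (0:ℝ) < jap x ^ (-lam) := Real.rpow_pos_of_pos (jap_pos x) _
    positivity
  have hκlow : ∀ p : E3 × E3, p.1 ∈ Av → klow ≤ κ (x - p.1) := by
    intro p hp1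
    have hp1R : ‖p.1‖ ≤ R := hp1
    have hjaple : jap (x - p.1) ≤ B * jap x := by
      rw [jap, jap, hBdef, ← Real.sqrt_mul (by positivity)]
      apply Real.sqrt_le_sqrt
      have h1 : ‖x - p.1‖ ≤ ‖x‖ + R := (norm_sub_le x p.1).trans (by linarith)
      nlinarith [norm_nonneg (x - p.1), norm_nonneg x, sq_nonneg (‖x‖ - R),
        pow_le_pow_left₀ (norm_nonneg (x - p.1)) h1 2]
    have h1 : (B * jap x) ^ (-lam) ≤ jap (x - p.1) ^ (-lam) :=
      Real.rpow_le_rpow_of_nonpos (jap_pos _) hjaple (neg_nonpos.2 hlam)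
    have h2 : (B * jap x) ^ (-lam) = B ^ (-lam) * jap x ^ (-lam) :=
      Real.mul_rpow hB0.le (jap_pos x).le
    have h3 := (hκ (x - p.1)).1
    calc klow = κ₁ * (B * jap x) ^ (-lam) := by rw [hklowdef, h2]
      _ ≤ κ₁ * jap (x - p.1) ^ (-lam) := mul_le_mul_of_nonneg_left h1 hκ₁.le
      _ ≤ κ (x - p.1) := h3
  have hQlow : ∀ p : E3 × E3, p.2 ∈ Gv →
      qlow ≤ ‖v - p.2‖ ^ (γ + 2) * (‖ξ‖ ^ 2 - (inner ℝ (v - p.2) ξ : ℝ) ^ 2 / ‖v - p.2‖ ^ 2) := by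
    intro p hp2
    obtain ⟨hp2R, hpD⟩ := hp2
    have hDpos : 0 < Dfun p.2 := lt_of_lt_of_le (by positivity) hpD
    have hwne : v - p.2 ≠ 0 := by
      intro h
      rw [hDdef] at hDpos
      simp only [h] at hDpos
      simp at hDpos
    have hwpos : 0 < ‖v - p.2‖ := norm_pos_iff.2 hwne
    have hQeq : ‖v - p.2‖ ^ (γ + 2) * (‖ξ‖ ^ 2 - (inner ℝ (v - p.2) ξ : ℝ) ^ 2 / ‖v - p.2‖ ^ 2)
        = ‖v - p.2‖ ^ γ * Dfun p.2 := by
      rw [Real.rpow_add hwpos, Real.rpow_two, hDdef]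
      field_simp
    have hwle : ‖v - p.2‖ ≤ (1 + R) * jap v := by
      have h1 : ‖v - p.2‖ ≤ ‖v‖ + ‖p.2‖ := norm_sub_le v p.2
      have h2 : ‖v‖ ≤ jap v := norm_le_jap v
      have h3 : ‖p.2‖ ≤ R * jap v := by
        calc ‖p.2‖ ≤ R := hp2R
          _ = R * 1 := (mul_one R).symm
          _ ≤ R * jap v := mul_le_mul_of_nonneg_left (jap_one_le v) hR0.le
      calc ‖v - p.2‖ ≤ ‖v‖ + ‖p.2‖ := h1
        _ ≤ jap v + R * jap v := add_le_add h2 h3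
        _ = (1 + R) * jap v := by ring
    have h1 : ((1 + R) * jap v) ^ γ ≤ ‖v - p.2‖ ^ γ :=
      Real.rpow_le_rpow_of_nonpos hwpos hwle hγr
    have h2 : ((1 + R) * jap v) ^ γ = (1 + R) ^ γ * jap v ^ γ :=
      Real.mul_rpow (by linarith) (jap_pos v).le
    rw [hQeq]
    calc qlow = ((1 + R) * jap v) ^ γ * (r ^ 2 * ‖ξ‖ ^ 2) := by rw [hqlowdef, h2]
      _ ≤ ‖v - p.2‖ ^ γ * (r ^ 2 * ‖ξ‖ ^ 2) := by
          apply mul_le_mul_of_nonneg_right h1 (by positivity)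
      _ ≤ ‖v - p.2‖ ^ γ * Dfun p.2 := by
          apply mul_le_mul_of_nonneg_left hpD (Real.rpow_nonneg hwpos.le _)
  have hQnn : ∀ w : E3,
      0 ≤ ‖w‖ ^ (γ + 2) * (‖ξ‖ ^ 2 - (inner ℝ w ξ : ℝ) ^ 2 / ‖w‖ ^ 2) := by
    intro w
    rcases eq_or_ne w 0 with rfl | hw
    · rw [norm_zero, Real.zero_rpow hγ1.ne']
      simp
    · have hwpos : 0 < ‖w‖ := norm_pos_iff.2 hw
      apply mul_nonneg (Real.rpow_nonneg hwpos.le _)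
      rw [sub_nonneg, div_le_iff₀ (by positivity)]
      have h := abs_real_inner_le_norm w ξ
      nlinarith [abs_nonneg (inner ℝ w ξ : ℝ), sq_abs (inner ℝ w ξ : ℝ)]
  -- pointwise inequality for the integrands
  set cpt : ℝ := qlow * klow with hcptdef
  have hcpt0 : 0 ≤ cpt := mul_nonneg hqlow0 hklow0
  have hptw : ∀ p : E3 × E3, Gset.indicator (fun q => cpt * f q) p ≤
      ∑ i : Fin 3, ∑ j : Fin 3, ξ i * (Nker γ (v - p.2) i j * κ (x - p.1) * f p) * ξ j := by
    intro p
    rw [quad_eq']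
    by_cases hp : p ∈ Gset
    · rw [Set.indicator_of_mem hp]
      obtain ⟨hp1, hp2⟩ := hp
      have hκl := hκlow p hp1
      have hQl := hQlow p hp2
      have hκnn : 0 ≤ κ (x - p.1) := hklow0.trans hκl
      have h1 : cpt ≤ (‖v - p.2‖ ^ (γ + 2)
          * (‖ξ‖ ^ 2 - (inner ℝ (v - p.2) ξ : ℝ) ^ 2 / ‖v - p.2‖ ^ 2)) * κ (x - p.1) := by
        rw [hcptdef]
        exact mul_le_mul hQl hκl hklow0 (hQnn _)
      calc cpt * f p ≤ ((‖v - p.2‖ ^ (γ + 2)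
            * (‖ξ‖ ^ 2 - (inner ℝ (v - p.2) ξ : ℝ) ^ 2 / ‖v - p.2‖ ^ 2)) * κ (x - p.1)) * f p :=
            mul_le_mul_of_nonneg_right h1 (hf_nonneg p)
        _ = ‖v - p.2‖ ^ (γ + 2)
            * (‖ξ‖ ^ 2 - (inner ℝ (v - p.2) ξ : ℝ) ^ 2 / ‖v - p.2‖ ^ 2)
            * (κ (x - p.1) * f p) := by ring
    · rw [Set.indicator_of_notMem hp]
      have hκnn : 0 ≤ κ (x - p.1) := by
        have h1 := (hκ (x - p.1)).1
        have h2 : (0:ℝ) < jap (x - p.1) ^ (-lam) := Real.rpow_pos_of_pos (jap_pos _) _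
        nlinarith
      exact mul_nonneg (hQnn _) (mul_nonneg hκnn (hf_nonneg p))
  -- integrability of both sides
  have hind_int : Integrable (fun p : E3 × E3 => Gset.indicator (fun q => cpt * f q) p) :=
    (hf_int.const_mul cpt).indicator hGmeas
  have hH_int : Integrable (fun p : E3 × E3 =>
      ∑ i : Fin 3, ∑ j : Fin 3, ξ i * (Nker γ (v - p.2) i j * κ (x - p.1) * f p) * ξ j) := by
    apply integrable_finset_sum
    intro i _
    apply integrable_finset_sum
    intro j _
    exact ((hInt i j).const_mul (ξ i)).mul_const (ξ j)
  -- swap sum and integral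
  have hswap : ∑ i : Fin 3, ∑ j : Fin 3,
      ξ i * (∫ p : E3 × E3, Nker γ (v - p.2) i j * κ (x - p.1) * f p) * ξ j
      = ∫ p : E3 × E3,
        ∑ i : Fin 3, ∑ j : Fin 3, ξ i * (Nker γ (v - p.2) i j * κ (x - p.1) * f p) * ξ j := by
    rw [integral_finset_sum _ (fun i _ => integrable_finset_sum _
      (fun j _ => ((hInt i j).const_mul (ξ i)).mul_const (ξ j)))]
    apply Finset.sum_congr rfl
    intro i _
    rw [integral_finset_sum _ (fun j _ => ((hInt i j).const_mul (ξ i)).mul_const (ξ j))]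
    apply Finset.sum_congr rfl
    intro j _
    rw [← integral_const_mul, ← integral_mul_const]
  -- conclusion
  calc (1 + R) ^ γ * r ^ 2 * κ₁ * B ^ (-lam) * (ρ₀ / 2) * jap x ^ (-lam) * jap v ^ γ * ‖ξ‖ ^ 2
      = cpt * (ρ₀ / 2) := by rw [hcptdef, hqlowdef, hklowdef]; ring
    _ ≤ cpt * ∫ p in Gset, f p := mul_le_mul_of_nonneg_left hGmass hcpt0
    _ = ∫ p : E3 × E3, Gset.indicator (fun q => cpt * f q) p := by
        rw [integral_indicator hGmeas, integral_const_mul]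
    _ ≤ ∫ p : E3 × E3,
          ∑ i : Fin 3, ∑ j : Fin 3, ξ i * (Nker γ (v - p.2) i j * κ (x - p.1) * f p) * ξ j :=
        integral_mono hind_int hH_int hptw
    _ = ∑ i : Fin 3, ∑ j : Fin 3,
          ξ i * (∫ p : E3 × E3, Nker γ (v - p.2) i j * κ (x - p.1) * f p) * ξ j := hswap.symm
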